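/- arXiv:0712.1079 — 2 statements merged into one kernel-verified Lean document; each statement's English description precedes it below -/
import Mathlib

section
/- Let V be an n-dimensional vector space over an algebraically closed field, x a nilpotent endomorphism of Jordan type λ, and v ∈ V with normal basis of type (μ;ν) (so λ = μ+ν). Then the subspace E^{(v,x)} = {y ∈ End(V) : xy = yx and yv = 0} has dimension b(μ;ν) = 2n(μ) + 2n(ν) + |ν|. -/
/-- A partition: a nonincreasing sequence of nonnegative integers (indexed from 0)
with finitely many nonzero terms. -/
def IsPartition (f : ℕ → ℕ) : Prop :=
  Antitone f ∧ (Function.support f).Finite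

/-- The size `|f| = Σ_i f_i` of a partition. -/
noncomputable def psize (f : ℕ → ℕ) : ℕ := ∑ᶠ i, f i

/-- `nFn f = Σ_{i≥1} (i-1) f_i`, written with 0-indexing as `Σ_i i * f i`. -/
noncomputable def nFn (f : ℕ → ℕ) : ℕ := ∑ᶠ i, i * f i

/-- Index set of the diagram of `μ + ν`: pairs `(i,j)` (0-indexed row `i`,
position `j`) with `j < μ_i + ν_i`. -/
def BipIdx (μ ν : ℕ → ℕ) : Type := {p : ℕ × ℕ // p.2 < μ p.1 + ν p.1}

/-- `b` is a normal basis of type `(μ;ν)` for `(v,x)`: it is a Jordan basis for `x`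
of shape `μ + ν` (so `x b_{i,j} = b_{i,j-1}` and `x b_{i,0} = 0`), and
`v = Σ_{i : μ_i > 0} b_{i, μ_i - 1}`. -/
def IsNormalBasis {F V : Type*} [Field F] [AddCommGroup V] [Module F V]
    (μ ν : ℕ → ℕ) (v : V) (x : Module.End F V) (b : Module.Basis (BipIdx μ ν) F V) : Prop :=
  (∀ p : BipIdx μ ν,
    x (b p) = if p.1.2 = 0 then 0
      else b ⟨(p.1.1, p.1.2 - 1), lt_of_le_of_lt (Nat.sub_le _ _) p.2⟩) ∧
  v = ∑ᶠ i : {i : ℕ // 0 < μ i},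
        b ⟨(i.1, μ i.1 - 1),
           lt_of_lt_of_le (Nat.sub_lt i.2 Nat.one_pos) (Nat.le_add_right _ _)⟩

/-!
An endomorphism `y` commuting with `x` is determined by the images of the top vectors
`b (k, λ k - 1)` of the Jordan chains, and these images can be any vectors killed by `x ^ λ k`
(`IsJordanBasis.centralizerEquiv`). As `ker (x ^ m)` is spanned by the `b (i, j)` with `j < m`,
the centralizer of `x` has dimension `∑ i k, min (λ i) (λ k) = ∑ i, (2 i + 1) λ i`.

Evaluation at `v = ∑ k, x ^ ν k (b (k, λ k - 1))` maps the centralizer onto the span of the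
`b (i, j)` with `j < μ i`, of dimension `|μ|`: the image lies in it because `μ` and `ν` are both
nonincreasing, and `b (i, j)` is the image of the commuting map that sends the top of row `i` to
`b (i, j + ν i)` and all other tops to `0`. Rank–nullity then gives
`dim E^{(v,x)} = |λ| + 2 n(λ) - |μ| = 2 n(μ) + 2 n(ν) + |ν|`.
-/

open Module Function

theorem exists_forall_ge_eq_zero {f : ℕ → ℕ} (hf : (support f).Finite) :
    ∃ N, ∀ i, N ≤ i → f i = 0 := by
  obtain ⟨M, hM⟩ := hf.bddAbove
  exact ⟨M + 1, fun i hi => by_contra fun h => by have := hM h; omega⟩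

theorem lt_of_forall_ge_eq_zero {f : ℕ → ℕ} {N k : ℕ} (hN : ∀ i, N ≤ i → f i = 0)
    (hk : f k ≠ 0) : k < N :=
  by_contra fun h => hk (hN k (not_lt.1 h))

theorem psize_eq_sum_range {f : ℕ → ℕ} {N : ℕ} (hN : ∀ i, N ≤ i → f i = 0) :
    psize f = ∑ i ∈ Finset.range N, f i :=
  finsum_eq_sum_of_support_subset _ fun _ hi =>
    Finset.mem_range.2 (lt_of_forall_ge_eq_zero hN hi)

theorem nFn_eq_sum_range {f : ℕ → ℕ} {N : ℕ} (hN : ∀ i, N ≤ i → f i = 0) :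
    nFn f = ∑ i ∈ Finset.range N, i * f i :=
  finsum_eq_sum_of_support_subset _ fun _ hi =>
    Finset.mem_range.2 (lt_of_forall_ge_eq_zero hN (right_ne_zero_of_mul hi))

theorem sum_range_sum_range_min {f : ℕ → ℕ} (hf : Antitone f) (N : ℕ) :
    ∑ k ∈ Finset.range N, ∑ i ∈ Finset.range N, min (f i) (f k) =
      ∑ i ∈ Finset.range N, (2 * i + 1) * f i := by
  induction N with
  | zero => simp
  | succ N ih =>
    have hlast : ∀ k ∈ Finset.range N, ∑ i ∈ Finset.range (N + 1), min (f i) (f k) =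
        ∑ i ∈ Finset.range N, min (f i) (f k) + f N := fun k hk => by
      rw [Finset.sum_range_succ, min_eq_left (hf (Finset.mem_range.1 hk).le)]
    have hnew : ∑ i ∈ Finset.range (N + 1), min (f i) (f N) = (N + 1) * f N := by
      rw [Finset.sum_congr rfl fun i hi => min_eq_right (hf (Finset.mem_range_succ_iff.1 hi)),
        Finset.sum_const, Finset.card_range, smul_eq_mul]
    rw [Finset.sum_range_succ, Finset.sum_congr rfl hlast, Finset.sum_add_distrib, ih, hnew,
      Finset.sum_const, Finset.card_range, smul_eq_mul, Finset.sum_range_succ]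
    ring

-- `BipIdx μ ν` is `JordanIdx fun i => μ i + ν i` by definition.
abbrev JordanIdx (l : ℕ → ℕ) : Type := {p : ℕ × ℕ // p.2 < l p.1}

namespace JordanIdx

variable {l : ℕ → ℕ}

def top (k : {k // 0 < l k}) : JordanIdx l := ⟨(k, l k - 1), Nat.sub_lt k.2 Nat.one_pos⟩

def row (p : JordanIdx l) : {k // 0 < l k} := ⟨p.1.1, Nat.zero_lt_of_lt p.2⟩

variable {N : ℕ}

def equivSigma (hN : ∀ i, N ≤ i → l i = 0) : JordanIdx l ≃ Σ i : Fin N, Fin (l i) where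
  toFun p := ⟨⟨p.1.1, lt_of_forall_ge_eq_zero hN (Nat.ne_zero_of_lt p.2)⟩, ⟨p.1.2, p.2⟩⟩
  invFun q := ⟨(q.1, q.2), q.2.2⟩
  left_inv _ := rfl
  right_inv _ := rfl

theorem finite_of_forall_ge (hN : ∀ i, N ≤ i → l i = 0) : Finite (JordanIdx l) :=
  Finite.of_equiv _ (equivSigma hN).symm

theorem finite_rows_of_forall_ge (hN : ∀ i, N ≤ i → l i = 0) : Finite {k // 0 < l k} :=
  Finite.of_injective (fun k => (⟨k.1, lt_of_forall_ge_eq_zero hN k.2.ne'⟩ : Fin N))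
    fun _ _ h => Subtype.ext (congrArg Fin.val h)

theorem natCard_eq_sum (hN : ∀ i, N ≤ i → l i = 0) :
    Nat.card (JordanIdx l) = ∑ i ∈ Finset.range N, l i := by
  rw [Nat.card_congr (equivSigma hN), Nat.card_sigma, ← Fin.sum_univ_eq_sum_range]
  simp

theorem natCard_subtype_eq_sum (hN : ∀ i, N ≤ i → l i = 0) (f : ℕ → ℕ) :
    Nat.card {p : JordanIdx l // p.1.2 < f p.1.1} = ∑ i ∈ Finset.range N, min (l i) (f i) := by
  rw [← natCard_eq_sum fun i hi => by simp [hN i hi]]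
  exact Nat.card_congr
    { toFun p := ⟨p.1.1, lt_min p.1.2 p.2⟩
      invFun q := ⟨⟨q.1, q.2.trans_le (min_le_left _ _)⟩, q.2.trans_le (min_le_right _ _)⟩
      left_inv _ := rfl
      right_inv _ := rfl }

theorem sum_rows_eq_sum_range [Fintype {k // 0 < l k}] (hN : ∀ i, N ≤ i → l i = 0)
    (g : ℕ → ℕ) (hg : g 0 = 0) :
    ∑ k : {k // 0 < l k}, g (l k) = ∑ k ∈ Finset.range N, g (l k) := by
  rw [← Finset.sum_subtype ((Finset.range N).filter (0 < l ·)) (fun k => ?_) (fun k => g (l k)),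
    Finset.sum_filter_of_ne fun k _ hk => Nat.pos_of_ne_zero fun h => hk (by rw [h, hg])]
  simp only [Finset.mem_filter, Finset.mem_range, and_iff_right_iff_imp]
  exact fun hk => lt_of_forall_ge_eq_zero hN hk.ne'

end JordanIdx

section

variable {F V : Type*} [Field F] [AddCommGroup V] [Module F V]

theorem commute_of_mem_ker {x y : Module.End F V}
    (hy : y ∈ LinearMap.ker (LinearMap.mulLeft F x - LinearMap.mulRight F x)) : Commute x y :=
  show x * y = y * x by simpa [sub_eq_zero] using hy

theorem mem_ker_of_commute {x y : Module.End F V} (h : Commute x y) :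
    y ∈ LinearMap.ker (LinearMap.mulLeft F x - LinearMap.mulRight F x) := by
  simpa [sub_eq_zero] using h.eq

theorem finrank_inf_ker_eq_finrank_ker_domRestrict {M N : Type*} [AddCommGroup M] [Module F M]
    [AddCommGroup N] [Module F N] (p : Submodule F M) (f : M →ₗ[F] N) :
    finrank F ↥(p ⊓ LinearMap.ker f) = finrank F (LinearMap.ker (f.domRestrict p)) := by
  rw [LinearMap.ker_domRestrict, ← Submodule.map_comap_subtype, Submodule.finrank_map_subtype_eq]

variable {l : ℕ → ℕ}

-- The first half of `IsNormalBasis`.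
def IsJordanBasis (x : Module.End F V) (b : Basis (JordanIdx l) F V) : Prop :=
  ∀ p : JordanIdx l, x (b p) = if p.1.2 = 0 then 0
    else b ⟨(p.1.1, p.1.2 - 1), lt_of_le_of_lt (Nat.sub_le _ _) p.2⟩

def truncSpan (b : Basis (JordanIdx l) F V) (f : ℕ → ℕ) : Submodule F V :=
  Submodule.span F (b '' {p | p.1.2 < f p.1.1})

theorem mem_truncSpan_iff {b : Basis (JordanIdx l) F V} {f : ℕ → ℕ} {w : V} :
    w ∈ truncSpan b f ↔ ∀ p : JordanIdx l, f p.1.1 ≤ p.1.2 → b.repr w p = 0 := by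
  rw [truncSpan, b.mem_span_image]
  refine ⟨fun h p hp => ?_, fun h p hp => ?_⟩
  · by_contra hne
    exact absurd (h (Finsupp.mem_support_iff.2 hne)) (not_lt.2 hp)
  · by_contra hge
    exact Finsupp.mem_support_iff.1 hp (h p (not_lt.1 hge))

theorem finrank_truncSpan (b : Basis (JordanIdx l) F V) (f : ℕ → ℕ) :
    finrank F (truncSpan b f) = Nat.card {p : JordanIdx l // p.1.2 < f p.1.1} := by
  have hli := b.linearIndependent.comp _
    (Subtype.val_injective (p := fun p : JordanIdx l => p.1.2 < f p.1.1))
  rw [truncSpan, Set.image_eq_range]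
  exact finrank_eq_nat_card_basis (Basis.span hli)

namespace IsJordanBasis

variable {x : Module.End F V} {b : Basis (JordanIdx l) F V} (hx : IsJordanBasis x b)
include hx

theorem pow_apply (m : ℕ) (p : JordanIdx l) :
    (x ^ m) (b p) =
      if m ≤ p.1.2 then b ⟨(p.1.1, p.1.2 - m), (Nat.sub_le _ _).trans_lt p.2⟩ else 0 := by
  induction m generalizing p with
  | zero => simp
  | succ m ih =>
    obtain ⟨⟨i, j⟩, hj⟩ := p
    rw [pow_succ, Module.End.mul_apply, hx]
    rcases j with _ | j
    · simp
    · simp only [Nat.add_sub_cancel, if_neg (Nat.succ_ne_zero j), ih]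
      by_cases h : m ≤ j <;> simp [h]

theorem repr_pow_apply_basis (m : ℕ) (q p : JordanIdx l) :
    b.repr ((x ^ m) (b q)) p = if q.1 = (p.1.1, p.1.2 + m) then 1 else 0 := by
  obtain ⟨⟨i', j'⟩, hj'⟩ := q
  obtain ⟨⟨i, j⟩, hj⟩ := p
  rw [hx.pow_apply]
  by_cases hm : m ≤ j'
  · rw [if_pos hm, Basis.repr_self_apply]
    simp only [Subtype.mk.injEq, Prod.mk.injEq]
    exact if_congr (by constructor <;> intro h <;> omega) rfl rfl
  · rw [if_neg hm, if_neg (by simp only [Prod.mk.injEq]; omega)]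
    simp

theorem repr_pow_apply (m : ℕ) (w : V) (p : JordanIdx l) :
    b.repr ((x ^ m) w) p =
      if h : p.1.2 + m < l p.1.1 then b.repr w ⟨(p.1.1, p.1.2 + m), h⟩ else 0 := by
  split_ifs with h
  · suffices (b.coord p).comp (x ^ m) = b.coord ⟨(p.1.1, p.1.2 + m), h⟩ from
      LinearMap.congr_fun this w
    refine b.ext fun q => ?_
    simp only [LinearMap.comp_apply, Basis.coord_apply, hx.repr_pow_apply_basis,
      Basis.repr_self_apply, Subtype.ext_iff]
  · suffices (b.coord p).comp (x ^ m) = 0 from LinearMap.congr_fun this w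
    refine b.ext fun q => ?_
    simp only [LinearMap.comp_apply, Basis.coord_apply, hx.repr_pow_apply_basis,
      LinearMap.zero_apply, ite_eq_right_iff, one_ne_zero, imp_false]
    intro hq
    exact h (by simpa [hq] using q.2)

theorem ker_pow (m : ℕ) : LinearMap.ker (x ^ m) = truncSpan b (fun _ => m) := by
  ext w
  rw [LinearMap.mem_ker, mem_truncSpan_iff, ← b.repr.map_eq_zero_iff, Finsupp.ext_iff]
  simp only [Finsupp.coe_zero, Pi.zero_apply, hx.repr_pow_apply, dite_eq_right_iff]
  constructor
  · intro h q hq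
    have := h ⟨(q.1.1, q.1.2 - m), lt_of_le_of_lt (Nat.sub_le _ _) q.2⟩
      (by have := q.2; dsimp only; omega)
    simpa [Nat.sub_add_cancel hq] using this
  · exact fun h p _ => h _ (Nat.le_add_left _ _)

theorem pow_apply_top_eq_zero (k : {k // 0 < l k}) : (x ^ l k) (b (JordanIdx.top k)) = 0 := by
  rw [hx.pow_apply, if_neg (by simp [JordanIdx.top, k.2])]

theorem pow_apply_top (p : JordanIdx l) :
    (x ^ (l p.1.1 - 1 - p.1.2)) (b (JordanIdx.top p.row)) = b p := by
  have := p.2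
  rw [hx.pow_apply, if_pos (by simp [JordanIdx.top, JordanIdx.row])]
  refine congrArg b (Subtype.ext (Prod.ext rfl ?_))
  simp only [JordanIdx.top, JordanIdx.row]
  omega

theorem commute_constr (w : (k : {k // 0 < l k}) → LinearMap.ker (x ^ l k)) :
    Commute x (b.constr F fun p => (x ^ (l p.1.1 - 1 - p.1.2)) (w p.row)) := by
  refine b.ext fun p => ?_
  obtain ⟨⟨k, j⟩, hj⟩ := p
  rw [Module.End.mul_apply, Module.End.mul_apply, Basis.constr_basis, hx, ← Module.End.mul_apply,
    ← pow_succ']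
  rcases j with _ | j
  · rw [if_pos rfl, map_zero]
    simp [JordanIdx.row, Nat.sub_add_cancel (Nat.zero_lt_of_lt hj)]
  · rw [if_neg (Nat.add_one_ne_zero j), Basis.constr_basis]
    congr 2
    dsimp only at hj ⊢
    omega

noncomputable def centralizerEquiv :
    LinearMap.ker (LinearMap.mulLeft F x - LinearMap.mulRight F x) ≃ₗ[F]
      ((k : {k // 0 < l k}) → LinearMap.ker (x ^ l k)) where
  toFun y k := ⟨y.1 (b (JordanIdx.top k)), by
    rw [LinearMap.mem_ker, ← Module.End.mul_apply, ((commute_of_mem_ker y.2).pow_left _).eq,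
      Module.End.mul_apply, hx.pow_apply_top_eq_zero, map_zero]⟩
  map_add' _ _ := rfl
  map_smul' _ _ := rfl
  invFun w := ⟨b.constr F fun p => (x ^ (l p.1.1 - 1 - p.1.2)) (w p.row),
    mem_ker_of_commute (hx.commute_constr w)⟩
  left_inv y := by
    refine Subtype.ext (b.ext fun p => ?_)
    rw [Basis.constr_basis, ← hx.pow_apply_top p, ← Module.End.mul_apply,
      ← Module.End.mul_apply, ((commute_of_mem_ker y.2).pow_left _).eq]
  right_inv w := by
    funext k
    refine Subtype.ext ?_
    simp [JordanIdx.top, JordanIdx.row]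

theorem centralizerEquiv_symm_apply_basis (w : (k : {k // 0 < l k}) → LinearMap.ker (x ^ l k))
    (p : JordanIdx l) :
    (hx.centralizerEquiv.symm w : Module.End F V) (b p) =
      (x ^ (l p.1.1 - 1 - p.1.2)) (w p.row) :=
  b.constr_basis _ _ _

theorem finrank_centralizer {N : ℕ} (hN : ∀ i, N ≤ i → l i = 0) :
    finrank F (LinearMap.ker (LinearMap.mulLeft F x - LinearMap.mulRight F x)) =
      ∑ k ∈ Finset.range N, ∑ i ∈ Finset.range N, min (l i) (l k) := by
  have := JordanIdx.finite_of_forall_ge hN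
  have := Module.Finite.of_basis b
  have := JordanIdx.finite_rows_of_forall_ge hN
  have := Fintype.ofFinite {k // 0 < l k}
  rw [hx.centralizerEquiv.finrank_eq, Module.finrank_pi_fintype,
    Finset.sum_congr rfl fun k _ => by
      rw [hx.ker_pow, finrank_truncSpan, JordanIdx.natCard_subtype_eq_sum hN (fun _ => l k)]]
  exact JordanIdx.sum_rows_eq_sum_range hN (fun m => ∑ i ∈ Finset.range N, min (l i) m)
    (by simp)

end IsJordanBasis

namespace IsJordanBasis

variable {μ ν : ℕ → ℕ} {x : Module.End F V} {b : Basis (JordanIdx fun i => μ i + ν i) F V}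
  (hx : IsJordanBasis x b)
include hx

theorem pow_mem_truncSpan (hμ : Antitone μ) (hν : Antitone ν) {k : ℕ} {w : V}
    (hw : (x ^ (μ k + ν k)) w = 0) : (x ^ ν k) w ∈ truncSpan b μ := by
  rw [← LinearMap.mem_ker, hx.ker_pow, mem_truncSpan_iff] at hw
  rw [mem_truncSpan_iff]
  rintro ⟨⟨i, j⟩, hj⟩ (hij : μ i ≤ j)
  rw [hx.repr_pow_apply]
  split_ifs with h
  · refine hw _ ?_
    dsimp only at h ⊢
    rcases le_total i k with hik | hki
    · have := hμ hik
      omega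
    · have := hν hki
      omega
  · rfl

theorem basis_eq_pow_top (k : {k // 0 < μ k}) :
    b ⟨(k.1, μ k - 1), lt_of_lt_of_le (Nat.sub_lt k.2 Nat.one_pos) (Nat.le_add_right _ _)⟩ =
      (x ^ ν k) (b (JordanIdx.top ⟨k, Nat.lt_add_right _ k.2⟩)) := by
  have := hx.pow_apply_top ⟨(k.1, μ k - 1),
    lt_of_lt_of_le (Nat.sub_lt k.2 Nat.one_pos) (Nat.le_add_right _ _)⟩
  rw [show μ k + ν k - 1 - (μ k - 1) = ν k by have := k.2; omega] at this
  exact this.symm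

variable {v : V}
  (hv : v = ∑ᶠ k : {k : ℕ // 0 < μ k}, b ⟨(k.1, μ k - 1),
    lt_of_lt_of_le (Nat.sub_lt k.2 Nat.one_pos) (Nat.le_add_right _ _)⟩)
include hv

theorem apply_mem_truncSpan (hμ : Antitone μ) (hν : Antitone ν) {y : Module.End F V}
    (hy : y ∈ LinearMap.ker (LinearMap.mulLeft F x - LinearMap.mulRight F x)) :
    y v ∈ truncSpan b μ := by
  have hcomm (m : ℕ) : x ^ m * y = y * x ^ m := ((commute_of_mem_ker hy).pow_left m).eq
  rw [hv]
  refine finsum_induction (fun w => y w ∈ truncSpan b μ) (by simp)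
    (fun w w' hw hw' => by simpa using add_mem hw hw') fun k => ?_
  dsimp only
  rw [hx.basis_eq_pow_top, ← Module.End.mul_apply, ← hcomm, Module.End.mul_apply]
  refine hx.pow_mem_truncSpan hμ hν ?_
  rw [← Module.End.mul_apply, hcomm, Module.End.mul_apply]
  exact (congrArg y (hx.pow_apply_top_eq_zero ⟨k, Nat.lt_add_right _ k.2⟩)).trans (map_zero y)

theorem basis_mem_range_applyₗ [Finite {k // 0 < μ k}] (p : JordanIdx fun i => μ i + ν i)
    (hp : p.1.2 < μ p.1.1) :
    b p ∈ LinearMap.range ((LinearMap.applyₗ v).domRestrict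
      (LinearMap.ker (LinearMap.mulLeft F x - LinearMap.mulRight F x))) := by
  obtain ⟨⟨i, j⟩, hj⟩ := p
  dsimp only at hp
  let w : (k : {k // 0 < μ k + ν k}) → LinearMap.ker (x ^ (μ k + ν k)) :=
    Pi.single ⟨i, by omega⟩ ⟨b ⟨(i, j + ν i), by dsimp only; omega⟩, by
      rw [LinearMap.mem_ker, hx.pow_apply, if_neg (by dsimp only; omega)]⟩
  refine ⟨hx.centralizerEquiv.symm w, ?_⟩
  rw [LinearMap.domRestrict_apply, LinearMap.applyₗ_apply_apply, hv,
    map_finsum _ (Set.toFinite _), finsum_eq_single _ ⟨i, hp.trans_le' (Nat.zero_le _)⟩]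
  · rw [centralizerEquiv_symm_apply_basis]
    simp only [JordanIdx.row, w, Pi.single_eq_same]
    rw [show μ i + ν i - 1 - (μ i - 1) = ν i by omega, hx.pow_apply, if_pos (by simp)]
    simp
  · intro k hk
    rw [centralizerEquiv_symm_apply_basis]
    simp only [JordanIdx.row, w]
    have hki : (⟨k, Nat.lt_add_right _ k.2⟩ : {k // 0 < μ k + ν k}) ≠ ⟨i, by omega⟩ :=
      fun h => hk (Subtype.ext (congrArg Subtype.val h :))
    rw [Pi.single_eq_of_ne hki, ZeroMemClass.coe_zero, map_zero]

theorem range_applyₗ_domRestrict [Finite {k // 0 < μ k}] (hμ : Antitone μ)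
    (hν : Antitone ν) :
    LinearMap.range ((LinearMap.applyₗ v).domRestrict
      (LinearMap.ker (LinearMap.mulLeft F x - LinearMap.mulRight F x))) = truncSpan b μ := by
  refine le_antisymm ?_ ?_
  · rintro _ ⟨y, rfl⟩
    exact hx.apply_mem_truncSpan hv hμ hν y.2
  · rw [truncSpan, Submodule.span_le]
    rintro _ ⟨p, hp, rfl⟩
    exact hx.basis_mem_range_applyₗ hv p hp

theorem finrank_stabilizer_add_sum (hμ : Antitone μ) (hν : Antitone ν) {N : ℕ}
    (hN : ∀ i, N ≤ i → μ i + ν i = 0) :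
    finrank F ↥(LinearMap.ker (LinearMap.mulLeft F x - LinearMap.mulRight F x) ⊓
        LinearMap.ker (LinearMap.applyₗ v : Module.End F V →ₗ[F] V)) +
        ∑ i ∈ Finset.range N, μ i =
      ∑ i ∈ Finset.range N, (2 * i + 1) * (μ i + ν i) := by
  have := JordanIdx.finite_of_forall_ge hN
  have := Module.Finite.of_basis b
  have : Finite {k // 0 < μ k} :=
    JordanIdx.finite_rows_of_forall_ge (l := μ) fun i hi => by have := hN i hi; omega
  have hμN : ∑ i ∈ Finset.range N, μ i = finrank F (truncSpan b μ) := by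
    rw [finrank_truncSpan, JordanIdx.natCard_subtype_eq_sum hN]
    exact Finset.sum_congr rfl fun i _ => (min_eq_right (Nat.le_add_right _ _)).symm
  rw [finrank_inf_ker_eq_finrank_ker_domRestrict, hμN,
    ← hx.range_applyₗ_domRestrict hv hμ hν, add_comm, LinearMap.finrank_range_add_finrank_ker,
    hx.finrank_centralizer hN, sum_range_sum_range_min (hμ.add hν)]

end IsJordanBasis

end

theorem stabilizer_dim_general {F V : Type*} [Field F] [AddCommGroup V] [Module F V]
    (μ ν : ℕ → ℕ) (hμ : IsPartition μ) (hν : IsPartition ν)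
    (v : V) (x : Module.End F V) (b : Module.Basis (BipIdx μ ν) F V)
    (hb : IsNormalBasis μ ν v x b) :
    Module.finrank F
      ↥(LinearMap.ker (LinearMap.mulLeft F x - LinearMap.mulRight F x) ⊓
        LinearMap.ker ((LinearMap.applyₗ v : Module.End F V →ₗ[F] V))) =
      2 * nFn μ + 2 * nFn ν + psize ν := by
  obtain ⟨N, hN⟩ := exists_forall_ge_eq_zero ((hμ.2.union hν.2).subset (support_add μ ν))
  have hμN : ∀ i, N ≤ i → μ i = 0 := fun i hi => by have := hN i hi; omega
  have hνN : ∀ i, N ≤ i → ν i = 0 := fun i hi => by have := hN i hi; omega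
  have hdim := IsJordanBasis.finrank_stabilizer_add_sum (μ := μ) (ν := ν) (b := b)
    hb.1 hb.2 hμ.1 hν.1 hN
  have hsum : ∑ i ∈ Finset.range N, (2 * i + 1) * (μ i + ν i) =
      ∑ i ∈ Finset.range N, μ i + (2 * ∑ i ∈ Finset.range N, i * μ i +
        2 * ∑ i ∈ Finset.range N, i * ν i + ∑ i ∈ Finset.range N, ν i) := by
    simp only [Finset.mul_sum, ← Finset.sum_add_distrib]
    exact Finset.sum_congr rfl fun i _ => by ring
  rw [nFn_eq_sum_range hμN, nFn_eq_sum_range hνN, psize_eq_sum_range hνN]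
  omega

/-- If `(v,x)` has a normal basis of type `(μ;ν)`, then
`E^{(v,x)} = {y ∈ End(V) : xy = yx, yv = 0}` has dimension
`b(μ;ν) = 2n(μ) + 2n(ν) + |ν|`. -/
theorem stabilizer_dim {F V : Type*} [Field F] [AddCommGroup V] [Module F V]
    [IsAlgClosed F] [FiniteDimensional F V]
    (μ ν : ℕ → ℕ) (hμ : IsPartition μ) (hν : IsPartition ν)
    (v : V) (x : Module.End F V) (b : Module.Basis (BipIdx μ ν) F V)
    (hb : IsNormalBasis μ ν v x b) :
    Module.finrank F
      ↥(LinearMap.ker (LinearMap.mulLeft F x - LinearMap.mulRight F x) ⊓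
        LinearMap.ker ((LinearMap.applyₗ v : Module.End F V →ₗ[F] V))) =
      2 * nFn μ + 2 * nFn ν + psize ν :=
  stabilizer_dim_general μ ν hμ hν v x b hb
end

section
/- Let k×k' matrices of nonnegative integers with prescribed row sums (n_1,…,n_k) and column sums (n'_1,…,n'_{k'}) (both compositions of n) be in bijection with double cosets S_{(n'_j)} \ S_n / S_{(n_i)} of Young subgroups, via sending the double coset of w to the matrix (m_{ij}) with Σ_{i'≤i, j'≤j} m_{i'j'} = |{s ≤ n_1+⋯+n_i : w(s) ≤ n'_1+⋯+n'_j}|. This map is a well-defined bijection. -/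
/-- Partial sums of a composition: `psum c i = c_1 + ⋯ + c_i` (0-indexed). -/
def psum (c : ℕ → ℕ) (i : ℕ) : ℕ := ∑ j ∈ Finset.range i, c j

/-- The index of the block (of the composition `c`) containing position `s`
(0-indexed): the number of indices `i` with `c_1 + ⋯ + c_{i+1} ≤ s`. -/
noncomputable def blk (c : ℕ → ℕ) (s : ℕ) : ℕ := Nat.card {i : ℕ | psum c (i + 1) ≤ s}

/-- The Young subgroup of `S_n` attached to a composition `c`: permutations
preserving each consecutive block of sizes `c_1, c_2, …`. -/
noncomputable def Young (n : ℕ) (c : ℕ → ℕ) : Set (Equiv.Perm (Fin n)) :=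
  {w | ∀ s : Fin n, blk c ((w s : Fin n) : ℕ) = blk c (s : ℕ)}

/-- `w` and `w'` lie in the same double coset `S_{(c')} \ S_n / S_{(c)}`. -/
noncomputable def SameDC (n : ℕ) (c c' : ℕ → ℕ) (w w' : Equiv.Perm (Fin n)) : Prop :=
  ∃ a ∈ Young n c', ∃ b ∈ Young n c, w' = a * w * b

/-- The matrix `m` corresponds to `w` via the cumulative-sum condition
`Σ_{i'≤i, j'≤j} m_{i'j'} = |{s ≤ c_1+⋯+c_i : w(s) ≤ c'_1+⋯+c'_j}|`. -/
noncomputable def Corr (n : ℕ) (c c' : ℕ → ℕ) (w : Equiv.Perm (Fin n))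
    (m : ℕ → ℕ → ℕ) : Prop :=
  ∀ i j : ℕ,
    (∑ p ∈ Finset.range i ×ˢ Finset.range j, m p.1 p.2) =
      Nat.card {s : Fin n | (s : ℕ) < psum c i ∧ ((w s : Fin n) : ℕ) < psum c' j}

/-- `m` is a `k × k'` matrix of nonnegative integers with row sums `c` and
column sums `c'`. -/
noncomputable def MatSet (k k' : ℕ) (c c' : ℕ → ℕ) (m : ℕ → ℕ → ℕ) : Prop :=
  (∀ i j, (k ≤ i ∨ k' ≤ j) → m i j = 0) ∧
  (∀ i, (∑ j ∈ Finset.range k', m i j) = c i) ∧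
  (∀ j, (∑ i ∈ Finset.range k, m i j) = c' j)

/-! The matrix attached to `w` is forced: its `(p, q)` entry is the number of positions in the
`p`-th block of `c` that `w` sends into the `q`-th block of `c'`, and differencing the
cumulative counts in both directions recovers it. Multiplying `w` on either side by elements of
the Young subgroups does not change the block indices, so this matrix is constant on double
cosets. Conversely, if `w` and `w'` have the same matrix, the maps
`s ↦ (block of s, block of w s)` and `s ↦ (block of s, block of w' s)` have fibres of equal
sizes, and a permutation `b` carrying one to the other lies in the right Young subgroup with
`w' * b⁻¹ * w⁻¹` in the left one. For surjectivity, cut the `p`-th block of `c` into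
consecutive pieces of sizes `m p 0, m p 1, …` and send the pieces labelled `q`, of total size
`c' q`, onto the `q`-th block of `c'`. -/

open Finset

theorem eq_of_forall_sum_range_eq {M : Type*} [AddCancelCommMonoid M] {f g : ℕ → M}
    (h : ∀ i, ∑ x ∈ range i, f x = ∑ x ∈ range i, g x) : f = g :=
  funext fun i => add_left_cancel (a := ∑ x ∈ range i, f x) <| by
    rw [← sum_range_succ, h, h, sum_range_succ]

theorem eq_of_forall_sum_range_product_eq {M : Type*} [AddCancelCommMonoid M]
    {m m' : ℕ → ℕ → M}
    (h : ∀ i j, ∑ x ∈ range i ×ˢ range j, m x.1 x.2 = ∑ x ∈ range i ×ˢ range j, m' x.1 x.2) :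
    m = m' := by
  have hrow : ∀ j, (fun x => ∑ y ∈ range j, m x y) = fun x => ∑ y ∈ range j, m' x y :=
    fun j => eq_of_forall_sum_range_eq fun i => by simpa only [sum_product] using h i j
  exact funext fun x => eq_of_forall_sum_range_eq fun j => congrFun (hrow j) x

theorem Fin.natCard_Ico_val {n a b : ℕ} (hb : b ≤ n) :
    Nat.card {s : Fin n | a ≤ (s : ℕ) ∧ (s : ℕ) < b} = b - a := by
  have himage : Fin.val '' {s : Fin n | a ≤ (s : ℕ) ∧ (s : ℕ) < b} = Set.Ico a b := by
    ext x
    simp only [Set.mem_image, Set.mem_ofPred_eq, Set.mem_Ico]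
    exact ⟨by rintro ⟨s, hs, rfl⟩; exact hs, fun hx => ⟨⟨x, by omega⟩, hx, rfl⟩⟩
  rw [← Nat.card_image_of_injective Fin.val_injective, himage, Nat.card_coe_set_eq,
    Set.ncard_eq_toFinset_card']
  simp

theorem sum_natCard_fiber {α β : Type*} [Finite α] (f : α → β) (T : Finset β) :
    ∑ t ∈ T, Nat.card {a | f a = t} = Nat.card {a | f a ∈ T} := by
  classical
  have := Fintype.ofFinite α
  simp only [Nat.card_eq_card_toFinset, Set.toFinset_ofPred]
  exact sum_card_fiberwise_eq_card_filter univ T f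

theorem exists_perm_comp_eq_of_natCard_fiber_eq {α β : Type*} [Finite α] {f g : α → β}
    (h : ∀ b, Nat.card {a | f a = b} = Nat.card {a | g a = b}) :
    ∃ e : Equiv.Perm α, ∀ a, g (e a) = f a :=
  ⟨Equiv.ofFiberEquiv fun b => (Finite.card_eq.1 (h b)).some, Equiv.ofFiberEquiv_map _⟩

section Composition

variable {c : ℕ → ℕ}

theorem psum_succ (c : ℕ → ℕ) (i : ℕ) : psum c (i + 1) = psum c i + c i :=
  sum_range_succ c i

theorem psum_mono : Monotone (psum c) := fun _ _ hij =>
  sum_le_sum_of_subset (range_subset_range.2 hij)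

theorem psum_le_of_eq_zero {K : ℕ} (h0 : ∀ i, K ≤ i → c i = 0) (j : ℕ) :
    psum c j ≤ psum c K := by
  rcases le_total j K with hjK | hKj
  · exact psum_mono hjK
  · refine (sum_subset (range_subset_range.2 hKj) fun x _ hx => h0 x ?_).ge
    simpa using hx

theorem blk_lt_iff {s N : ℕ} (hs : s < psum c N) (i : ℕ) : blk c s < i ↔ s < psum c i := by
  have hex : ∃ i, s < psum c i := ⟨N, hs⟩
  have hlt : ∀ i, s < psum c i ↔ Nat.find hex ≤ i := fun i =>
    ⟨Nat.find_min' hex, fun h => (Nat.find_spec hex).trans_le (psum_mono h)⟩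
  have hpos : Nat.find hex ≠ 0 := fun h0 => by
    simpa [psum] using (hlt 0).2 h0.le
  have hset : {p | psum c (p + 1) ≤ s} = Set.Iio (Nat.find hex - 1) := by
    ext p
    rw [Set.mem_ofPred_eq, Set.mem_Iio, ← not_lt, hlt]
    omega
  rw [blk, hset, Nat.card_eq_card_toFinset, Set.toFinset_Iio, Nat.card_Iio, hlt]
  omega

theorem blk_eq_iff {s N : ℕ} (hs : s < psum c N) (p : ℕ) :
    blk c s = p ↔ psum c p ≤ s ∧ s < psum c (p + 1) := by
  rw [← blk_lt_iff hs, ← not_lt, ← blk_lt_iff hs]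
  omega

variable {n k : ℕ}

theorem blk_lt_of_psum_eq (hcs : psum c k = n) (s : Fin n) : blk c s < k :=
  (blk_lt_iff (s.isLt.trans_eq hcs.symm) k).2 (s.isLt.trans_eq hcs.symm)

theorem natCard_blk_eq (hc0 : ∀ i, k ≤ i → c i = 0) (hcs : psum c k = n) (p : ℕ) :
    Nat.card {s : Fin n | blk c s = p} = c p := by
  have hset : {s : Fin n | blk c s = p} =
      {s : Fin n | psum c p ≤ (s : ℕ) ∧ (s : ℕ) < psum c (p + 1)} := by
    ext s
    exact blk_eq_iff (s.isLt.trans_eq hcs.symm) p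
  rw [hset, Fin.natCard_Ico_val (hcs ▸ psum_le_of_eq_zero hc0 (p + 1)), psum_succ]
  omega

end Composition

section BlockMatrix

variable {n k k' : ℕ} {c c' : ℕ → ℕ}

noncomputable def blockMatrix (c c' : ℕ → ℕ) (w : Equiv.Perm (Fin n)) (p q : ℕ) : ℕ :=
  Nat.card {s : Fin n | (blk c s, blk c' (w s)) = (p, q)}

theorem sum_blockMatrix (w : Equiv.Perm (Fin n)) (T : Finset (ℕ × ℕ)) :
    ∑ t ∈ T, blockMatrix c c' w t.1 t.2 = Nat.card {s : Fin n | (blk c s, blk c' (w s)) ∈ T} :=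
  sum_natCard_fiber _ T

theorem corr_blockMatrix (hcs : psum c k = n) (hcs' : psum c' k' = n) (w : Equiv.Perm (Fin n)) :
    Corr n c c' w (blockMatrix c c' w) := by
  intro i j
  rw [sum_blockMatrix]
  congr 2
  ext s
  rw [Set.mem_ofPred_eq, Set.mem_ofPred_eq, mem_product, mem_range, mem_range,
    blk_lt_iff (s.isLt.trans_eq hcs.symm), blk_lt_iff ((w s).isLt.trans_eq hcs'.symm)]

theorem corr_iff_eq_blockMatrix (hcs : psum c k = n) (hcs' : psum c' k' = n)
    {w : Equiv.Perm (Fin n)} {m : ℕ → ℕ → ℕ} : Corr n c c' w m ↔ m = blockMatrix c c' w := by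
  refine ⟨fun h => eq_of_forall_sum_range_product_eq fun i j => ?_,
    fun h => h ▸ corr_blockMatrix hcs hcs' w⟩
  rw [h i j, corr_blockMatrix hcs hcs' w i j]

theorem blockMatrix_matSet (hc0 : ∀ i, k ≤ i → c i = 0) (hc'0 : ∀ j, k' ≤ j → c' j = 0)
    (hcs : psum c k = n) (hcs' : psum c' k' = n) (w : Equiv.Perm (Fin n)) :
    MatSet k k' c c' (blockMatrix c c' w) := by
  refine ⟨fun p q hpq => ?_, fun p => ?_, fun q => ?_⟩
  · have hempty : {s : Fin n | (blk c s, blk c' (w s)) = (p, q)} = ∅ := by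
      refine Set.eq_empty_of_forall_notMem fun s hs => ?_
      rw [Set.mem_ofPred_eq, Prod.mk.injEq] at hs
      have := blk_lt_of_psum_eq hcs s
      have := blk_lt_of_psum_eq hcs' (w s)
      omega
    rw [blockMatrix, hempty, Nat.card_of_isEmpty]
  · calc ∑ q ∈ range k', blockMatrix c c' w p q
        = ∑ t ∈ {p} ×ˢ range k', blockMatrix c c' w t.1 t.2 := by
          rw [sum_product, sum_singleton]
      _ = Nat.card {s : Fin n | blk c s = p} := by
          rw [sum_blockMatrix]
          congr 2
          ext s
          simp [blk_lt_of_psum_eq hcs' (w s), eq_comm]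
      _ = c p := natCard_blk_eq hc0 hcs p
  · calc ∑ p ∈ range k, blockMatrix c c' w p q
        = ∑ t ∈ range k ×ˢ {q}, blockMatrix c c' w t.1 t.2 := by
          rw [sum_product_right, sum_singleton]
      _ = Nat.card (w ⁻¹' {s : Fin n | blk c' s = q}) := by
          rw [sum_blockMatrix]
          congr 2
          ext s
          simp [blk_lt_of_psum_eq hcs s, eq_comm]
      _ = c' q := by
          rw [Nat.card_preimage_of_injective w.injective (by simp), natCard_blk_eq hc'0 hcs' q]

theorem blockMatrix_mul_mul {a w b : Equiv.Perm (Fin n)} (ha : a ∈ Young n c')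
    (hb : b ∈ Young n c) : blockMatrix c c' (a * w * b) = blockMatrix c c' w := by
  funext p q
  refine Nat.card_congr <| b.subtypeEquiv fun s => ?_
  rw [Set.mem_ofPred_eq, Set.mem_ofPred_eq, Equiv.Perm.mul_apply, Equiv.Perm.mul_apply,
    ha (w (b s)), hb s]

theorem sameDC_of_blockMatrix_eq {w w' : Equiv.Perm (Fin n)}
    (h : blockMatrix c c' w = blockMatrix c c' w') : SameDC n c c' w w' := by
  obtain ⟨b, hb⟩ := exists_perm_comp_eq_of_natCard_fiber_eq
    (f := fun s : Fin n => (blk c s, blk c' (w' s)))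
    (g := fun s : Fin n => (blk c s, blk c' (w s))) fun t => (congrFun (congrFun h t.1) t.2).symm
  refine ⟨w' * b⁻¹ * w⁻¹, fun t => ?_, b, fun s => congrArg Prod.fst (hb s), by group⟩
  simpa using (congrArg Prod.snd (hb (b⁻¹ (w⁻¹ t)))).symm

end BlockMatrix

section Surjectivity

variable {n k k' : ℕ} {c c' : ℕ → ℕ}

theorem natCard_blk_eq_and_blk_sub_eq {d : ℕ → ℕ} {p N : ℕ} (hc0 : ∀ i, k ≤ i → c i = 0)
    (hcs : psum c k = n) (hd0 : ∀ j, N ≤ j → d j = 0) (hd : psum d N = c p) (q : ℕ) :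
    Nat.card {s : Fin n | blk c s = p ∧ blk d (s - psum c p) = q} = d q := by
  have hdq : psum d (q + 1) ≤ c p := hd ▸ psum_le_of_eq_zero hd0 (q + 1)
  have hcp : psum c (p + 1) ≤ n := hcs ▸ psum_le_of_eq_zero hc0 (p + 1)
  have hcp' := psum_succ c p
  have hset : {s : Fin n | blk c s = p ∧ blk d (s - psum c p) = q} =
      {s : Fin n | psum c p + psum d q ≤ (s : ℕ) ∧ (s : ℕ) < psum c p + psum d (q + 1)} := by
    ext s
    rw [Set.mem_ofPred_eq, Set.mem_ofPred_eq, blk_eq_iff (s.isLt.trans_eq hcs.symm)]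
    constructor
    · rintro ⟨⟨hps, hsp⟩, hq⟩
      rw [blk_eq_iff (N := N) (by omega)] at hq
      omega
    · rintro ⟨hps, hsp⟩
      exact ⟨by omega, (blk_eq_iff (N := N) (by omega) q).2 (by omega)⟩
  rw [hset, Fin.natCard_Ico_val (by omega), psum_succ]
  omega

/-- The column label of position `s` once each block of `c` is cut into consecutive pieces whose
sizes are the entries of the corresponding row of `m`. -/
noncomputable def colIndex (c : ℕ → ℕ) (m : ℕ → ℕ → ℕ) (s : ℕ) : ℕ :=
  blk (m (blk c s)) (s - psum c (blk c s))

variable {m : ℕ → ℕ → ℕ}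

theorem natCard_blk_colIndex (hc0 : ∀ i, k ≤ i → c i = 0) (hcs : psum c k = n)
    (hm : MatSet k k' c c' m) (p q : ℕ) :
    Nat.card {s : Fin n | (blk c s, colIndex c m s) = (p, q)} = m p q := by
  have hset : {s : Fin n | (blk c s, colIndex c m s) = (p, q)} =
      {s : Fin n | blk c s = p ∧ blk (m p) (s - psum c p) = q} := by
    ext s
    rw [Set.mem_ofPred_eq, Set.mem_ofPred_eq, Prod.mk.injEq, colIndex]
    constructor <;> rintro ⟨rfl, hq⟩ <;> exact ⟨rfl, hq⟩
  rw [hset]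
  exact natCard_blk_eq_and_blk_sub_eq hc0 hcs (fun j hj => hm.1 p j (Or.inr hj)) (hm.2.1 p) q

theorem natCard_colIndex_eq (hc0 : ∀ i, k ≤ i → c i = 0) (hcs : psum c k = n)
    (hm : MatSet k k' c c' m) (q : ℕ) :
    Nat.card {s : Fin n | colIndex c m s = q} = c' q := by
  calc Nat.card {s : Fin n | colIndex c m s = q}
      = Nat.card {s : Fin n | (blk c s, colIndex c m s) ∈ range k ×ˢ {q}} := by
        congr 2
        ext s
        simp [blk_lt_of_psum_eq hcs s, eq_comm]
    _ = ∑ t ∈ range k ×ˢ {q}, m t.1 t.2 := by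
        rw [← sum_natCard_fiber]
        exact sum_congr rfl fun t _ => natCard_blk_colIndex hc0 hcs hm t.1 t.2
    _ = c' q := by rw [sum_product_right, sum_singleton, hm.2.2 q]

theorem exists_blockMatrix_eq (hc0 : ∀ i, k ≤ i → c i = 0) (hc'0 : ∀ j, k' ≤ j → c' j = 0)
    (hcs : psum c k = n) (hcs' : psum c' k' = n) (hm : MatSet k k' c c' m) :
    ∃ w : Equiv.Perm (Fin n), blockMatrix c c' w = m := by
  obtain ⟨w, hw⟩ := exists_perm_comp_eq_of_natCard_fiber_eq
    (f := fun s : Fin n => colIndex c m s) (g := fun s : Fin n => blk c' s) fun q => by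
      rw [natCard_colIndex_eq hc0 hcs hm, natCard_blk_eq hc'0 hcs']
  refine ⟨w, funext₂ fun p q => ?_⟩
  simp only [blockMatrix, hw]
  exact natCard_blk_colIndex hc0 hcs hm p q

end Surjectivity

/-- Matrices of nonnegative integers with row sums `(n_1,…,n_k)` and column sums
`(n'_1,…,n'_{k'})` are in bijection with double cosets of Young subgroups,
via the cumulative-sum correspondence `Corr`: the correspondence is a
well-defined, constant-on-double-cosets, injective-on-double-cosets,
surjective map. -/
theorem doubleCoset_matrix_bijection (n k k' : ℕ) (c c' : ℕ → ℕ)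
    (hc0 : ∀ i, k ≤ i → c i = 0) (hc'0 : ∀ j, k' ≤ j → c' j = 0)
    (hcs : psum c k = n) (hcs' : psum c' k' = n) :
    (∀ w : Equiv.Perm (Fin n), ∃ m, MatSet k k' c c' m ∧ Corr n c c' w m) ∧
    (∀ w m m', Corr n c c' w m → Corr n c c' w m' →
      ∀ i j, i < k → j < k' → m i j = m' i j) ∧
    (∀ w w' m, SameDC n c c' w w' → Corr n c c' w m → Corr n c c' w' m) ∧
    (∀ w w' m, Corr n c c' w m → Corr n c c' w' m → SameDC n c c' w w') ∧
    (∀ m, MatSet k k' c c' m → ∃ w : Equiv.Perm (Fin n), Corr n c c' w m) := by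
  have hcorr := @corr_iff_eq_blockMatrix n k k' c c' hcs hcs'
  refine ⟨fun w => ⟨_, blockMatrix_matSet hc0 hc'0 hcs hcs' w, hcorr.2 rfl⟩, ?_, ?_, ?_, ?_⟩
  · intro w m m' h h' i j _ _
    rw [hcorr.1 h, hcorr.1 h']
  · rintro w _ m ⟨a, ha, b, hb, rfl⟩ h
    rw [hcorr, blockMatrix_mul_mul ha hb, ← hcorr]
    exact h
  · intro w w' m h h'
    exact sameDC_of_blockMatrix_eq ((hcorr.1 h).symm.trans (hcorr.1 h'))
  · intro m hm
    obtain ⟨w, hw⟩ := exists_blockMatrix_eq hc0 hc'0 hcs hcs' hm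
    exact ⟨w, hcorr.2 hw.symm⟩
end
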